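/- arXiv:2303.11871 — 4 statements merged into one kernel-verified Lean document; each statement's English description precedes it below -/
import Mathlib

section
/- Let p ≥ 1 and let K ⊆ ℂ^p be a compact set. Then K is determining (i.e. no nonzero polynomial in p complex variables vanishes identically on K) if and only if V_j(K) ≠ 0 for every j ≥ 1, where V_j(K) = max{ |vdm(ξ_0,…,ξ_{j−1})| : ξ_0,…,ξ_{j−1} ∈ K }. -/
open scoped BigOperators
open Filter

namespace PseudoLeja

/-- Graded lexicographic strict order on multi-indices in `ℕ^p`:
`α ≺ β` iff `|α| < |β|`, or `|α| = |β|` and the leftmost nonzero entry of `α - β`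
is negative (i.e. at the first index where they differ, `α` is smaller). -/
def GLexLT {p : ℕ} (α β : Fin p → ℕ) : Prop :=
  (∑ i, α i) < (∑ i, β i) ∨
    ((∑ i, α i) = (∑ i, β i) ∧ ∃ k, (∀ i, i < k → α i = β i) ∧ α k < β k)

/-- `κ : ℕ → ℕ^p` is the (unique) enumeration of all multi-indices that is strictly
increasing from the usual order on `ℕ` to the graded lexicographic order. -/
def IsGLexEnum {p : ℕ} (κ : ℕ → Fin p → ℕ) : Prop :=
  Function.Bijective κ ∧ ∀ m n : ℕ, m < n → GLexLT (κ m) (κ n)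

/-- The `N`-th monomial `e_N(z) = z^{κ(N)}`. -/
noncomputable def mono {p : ℕ} (κ : ℕ → Fin p → ℕ) (N : ℕ) (z : Fin p → ℂ) : ℂ :=
  ∏ i, z i ^ κ N i

/-- Vandermonde determinant of the points `ξ 0, …, ξ (n-1)`:
`vdm κ n ξ = det [e_N(ξ_M)]_{0 ≤ M, N ≤ n-1}`. -/
noncomputable def vdm {p : ℕ} (κ : ℕ → Fin p → ℕ) (n : ℕ) (ξ : ℕ → Fin p → ℂ) : ℂ :=
  Matrix.det (Matrix.of fun M N : Fin n => mono κ (N : ℕ) (ξ (M : ℕ)))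

/-- A set `K ⊆ ℂ^p` is determining if no nonzero polynomial in `p` complex
variables vanishes identically on `K`. -/
def Determining {p : ℕ} (K : Set (Fin p → ℂ)) : Prop :=
  ∀ P : MvPolynomial (Fin p) ℂ, (∀ z ∈ K, MvPolynomial.eval z P = 0) → P = 0

/-- `h_d = C(p+d, d)`, the dimension of the space of polynomials of total degree
at most `d` in `p` variables. -/
def hdim (p d : ℕ) : ℕ := Nat.choose (p + d) d

/-- `l_d = p·C(p+d, p+1)`, the degree of the Vandermonde determinant of `h_d` points. -/
def ldim (p d : ℕ) : ℕ := p * Nat.choose (p + d) (p + 1)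

/-- `V_j(K)`, the maximal modulus of the Vandermonde determinant of `j` points of `K`. -/
noncomputable def Vsup {p : ℕ} (κ : ℕ → Fin p → ℕ) (K : Set (Fin p → ℂ)) (j : ℕ) : ℝ :=
  sSup { v : ℝ | ∃ ξ : ℕ → Fin p → ℂ, (∀ i, ξ i ∈ K) ∧ v = ‖vdm κ j ξ‖ }

/-- `(ξ_j)_{j≥0} ⊆ K` is a pseudo Leja sequence for `K` with Edrei growth `(M_j)_{j≥1}`:
`M_j ≥ 1`, `M_j·|vdm(ξ_0,…,ξ_j)| ≥ max_{z∈K} |vdm(ξ_0,…,ξ_{j-1},z)|` for `j ≥ 1`, and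
`lim_{d→∞} (max_{h_{d-1} ≤ j < h_d} M_j)^{1/d} = 1`. -/
def IsPseudoLeja {p : ℕ} (κ : ℕ → Fin p → ℕ) (K : Set (Fin p → ℂ))
    (ξ : ℕ → Fin p → ℂ) (M : ℕ → ℝ) : Prop :=
  (∀ j, ξ j ∈ K) ∧
  (∀ j, 1 ≤ j → 1 ≤ M j) ∧
  (∀ j, 1 ≤ j → ∀ z ∈ K,
    ‖vdm κ (j + 1) (Function.update ξ j z)‖ ≤
      M j * ‖vdm κ (j + 1) ξ‖) ∧
  Filter.Tendsto
    (fun d : ℕ => (sSup (M '' Set.Ico (hdim p (d - 1)) (hdim p d))) ^ ((d : ℝ)⁻¹))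
    Filter.atTop (nhds 1)

/-! Both conditions say that the monomials `e_0, e_1, …` restricted to `K` are linearly
independent. For `Determining K` this is injectivity of restriction to `K`, read on the monomial
basis. For the Vandermonde side, functions `f_0, …, f_{j-1}` on a set are linearly independent
iff some evaluation matrix `[f_N(ξ_M)]` is nonsingular: independence makes the evaluation vectors
`(f_N(x))_N` span `F^j`, and `j` independent ones among them give the points `ξ_M`. Compactness
of `K` only serves to make `V_j(K)` an actual supremum. -/

end PseudoLeja

section EvaluationMatrix

variable {F X ι : Type*} [Field F] [Fintype ι] [DecidableEq ι]

theorem LinearIndependent.span_range_swap_eq_top {f : ι → X → F} (hf : LinearIndependent F f) :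
    Submodule.span F (Set.range (Function.swap f)) = ⊤ := by
  by_contra hne
  obtain ⟨φ, hφ0, hφ⟩ := Submodule.exists_le_ker_of_lt_top _ (lt_top_iff_ne_top.2 hne)
  have hc : ∑ j, φ (fun k => if j = k then 1 else 0) • f j = 0 := by
    funext x
    have hx : φ (fun j => f j x) = 0 := hφ (Submodule.subset_span ⟨x, rfl⟩)
    rw [LinearMap.pi_apply_eq_sum_univ] at hx
    simpa [mul_comm] using hx
  have hc0 := Fintype.linearIndependent_iff.1 hf _ hc
  exact hφ0 (LinearMap.ext fun v => by simp [LinearMap.pi_apply_eq_sum_univ φ v, hc0])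

theorem LinearIndependent.exists_det_ne_zero {f : ι → X → F} (hf : LinearIndependent F f) :
    ∃ x : ι → X, (Matrix.of fun i j => f j (x i)).det ≠ 0 := by
  obtain ⟨ι', a, -, hspan, hli⟩ := exists_linearIndependent' F (Function.swap f)
  rw [hf.span_range_swap_eq_top] at hspan
  let e : ι ≃ ι' := (Pi.basisFun F ι).indexEquiv (Module.Basis.mk hli hspan.ge)
  refine ⟨a ∘ e, ?_⟩
  rw [← isUnit_iff_ne_zero, ← Matrix.isUnit_iff_isUnit_det,
    ← Matrix.linearIndependent_rows_iff_isUnit]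
  exact hli.comp e e.injective

theorem linearIndependent_iff_exists_det_ne_zero {f : ι → X → F} :
    LinearIndependent F f ↔ ∃ x : ι → X, (Matrix.of fun i j => f j (x i)).det ≠ 0 := by
  refine ⟨LinearIndependent.exists_det_ne_zero, fun ⟨x, hx⟩ => ?_⟩
  rw [Fintype.linearIndependent_iff]
  intro c hc
  refine congrFun (Matrix.eq_zero_of_mulVec_eq_zero hx (funext fun i => ?_))
  simpa [Matrix.mulVec, dotProduct, mul_comm] using congrFun hc (x i)

end EvaluationMatrix

theorem Module.Basis.linearIndependent_comp_iff_injective {R M M' ι : Type*} [Ring R]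
    [AddCommGroup M] [AddCommGroup M'] [Module R M] [Module R M'] (b : Module.Basis ι R M)
    (f : M →ₗ[R] M') : LinearIndependent R (f ∘ b) ↔ Function.Injective f := by
  refine ⟨fun h => ?_, fun h => b.linearIndependent.map' f (LinearMap.ker_eq_bot.2 h)⟩
  have hf : ⇑f = Finsupp.linearCombination R (f ∘ b) ∘ b.repr := by
    funext m
    rw [Function.comp_apply, ← Finsupp.apply_linearCombination, b.linearCombination_repr]
  rw [hf]
  exact (linearIndependent_iff_injective_finsuppLinearCombination.1 h).comp b.repr.injective

theorem linearIndependent_nat_iff_forall_fin {R M : Type*} [Semiring R] [AddCommMonoid M]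
    [Module R M] {v : ℕ → M} :
    LinearIndependent R v ↔ ∀ n, LinearIndependent R fun i : Fin n => v i := by
  refine ⟨fun h n => h.comp _ Fin.val_injective, fun h => ?_⟩
  rw [linearIndependent_iff_finset_linearIndependent]
  intro s
  obtain ⟨n, hn⟩ := s.exists_nat_subset_range
  exact (h n).comp (fun i : s => ⟨i, Finset.mem_range.1 (hn i.2)⟩) fun i j hij =>
    Subtype.ext (congrArg Fin.val hij)

namespace PseudoLeja

variable {p : ℕ}

noncomputable def evalOn (K : Set (Fin p → ℂ)) : MvPolynomial (Fin p) ℂ →ₗ[ℂ] (K → ℂ) :=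
  LinearMap.pi fun z => (MvPolynomial.aeval (z : Fin p → ℂ)).toLinearMap

theorem determining_iff_injective_evalOn {K : Set (Fin p → ℂ)} :
    Determining K ↔ Function.Injective (evalOn K) := by
  rw [injective_iff_map_eq_zero, Determining]
  refine forall_congr' fun P => imp_congr_left ?_
  simp [evalOn, funext_iff]

theorem determining_iff_linearIndependent_mono {κ : ℕ → Fin p → ℕ} (hκ : Function.Bijective κ)
    {K : Set (Fin p → ℂ)} :
    Determining K ↔ LinearIndependent ℂ fun (N : ℕ) (z : K) => mono κ N z := by
  let e : ℕ ≃ (Fin p →₀ ℕ) := (Equiv.ofBijective κ hκ).trans Finsupp.equivFunOnFinite.symm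
  rw [determining_iff_injective_evalOn,
    ← ((MvPolynomial.basisMonomials (Fin p) ℂ).reindex e.symm).linearIndependent_comp_iff_injective]
  congr! with N z
  simp [evalOn, e, mono, MvPolynomial.eval_monomial, Finsupp.prod_fintype]

theorem continuous_vdm (κ : ℕ → Fin p → ℕ) (n : ℕ) : Continuous (vdm κ n) := by
  unfold vdm mono
  fun_prop

theorem bddAbove_norm_vdm (κ : ℕ → Fin p → ℕ) {K : Set (Fin p → ℂ)} (hK : IsCompact K) (n : ℕ) :
    BddAbove {v : ℝ | ∃ ξ : ℕ → Fin p → ℂ, (∀ i, ξ i ∈ K) ∧ v = ‖vdm κ n ξ‖} := by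
  refine ((isCompact_univ_pi fun _ => hK).image
    (continuous_norm.comp (continuous_vdm κ n))).bddAbove.mono ?_
  rintro _ ⟨ξ, hξ, rfl⟩
  exact ⟨ξ, fun i _ => hξ i, rfl⟩

theorem Vsup_ne_zero_iff (κ : ℕ → Fin p → ℕ) {K : Set (Fin p → ℂ)} (hK : IsCompact K) (n : ℕ) :
    Vsup κ K n ≠ 0 ↔ ∃ ξ : ℕ → Fin p → ℂ, (∀ i, ξ i ∈ K) ∧ vdm κ n ξ ≠ 0 := by
  constructor
  · contrapose!
    intro h
    refine le_antisymm (Real.sSup_nonpos ?_) (Real.sSup_nonneg ?_) <;>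
      rintro _ ⟨ξ, hξ, rfl⟩ <;> simp [h ξ hξ]
  · rintro ⟨ξ, hξ, h⟩
    exact ((norm_pos_iff.2 h).trans_le (le_csSup (bddAbove_norm_vdm κ hK n) ⟨ξ, hξ, rfl⟩)).ne'

theorem exists_vdm_ne_zero_iff (κ : ℕ → Fin p → ℕ) {K : Set (Fin p → ℂ)} {n : ℕ} (hn : 1 ≤ n) :
    (∃ ξ : ℕ → Fin p → ℂ, (∀ i, ξ i ∈ K) ∧ vdm κ n ξ ≠ 0) ↔
      LinearIndependent ℂ fun (N : Fin n) (z : K) => mono κ N z := by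
  rw [linearIndependent_iff_exists_det_ne_zero]
  constructor
  · rintro ⟨ξ, hξ, h⟩
    exact ⟨fun M => ⟨ξ M, hξ M⟩, h⟩
  · rintro ⟨x, hx⟩
    refine ⟨fun i => x ⟨min i (n - 1), by omega⟩, fun i => (x _).2, ?_⟩
    refine ne_of_eq_of_ne ?_ hx
    unfold vdm
    congr 1
    ext M N
    simp [show min (M : ℕ) (n - 1) = M by omega]

theorem determining_iff_Vsup_ne_zero_general {p : ℕ}
    (κ : ℕ → Fin p → ℕ) (hκ : IsGLexEnum κ)
    (K : Set (Fin p → ℂ)) (hK : IsCompact K) :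
    Determining K ↔ ∀ j : ℕ, 1 ≤ j → Vsup κ K j ≠ 0 := by
  rw [determining_iff_linearIndependent_mono hκ.1, linearIndependent_nat_iff_forall_fin]
  refine forall_congr' fun j => ?_
  rcases Nat.eq_zero_or_pos j with rfl | hj
  · simp
  · rw [Vsup_ne_zero_iff κ hK, exists_vdm_ne_zero_iff κ hj]
    exact (imp_iff_right hj).symm

/-- a compact set `K ⊆ ℂ^p` is determining iff `V_j(K) ≠ 0` for every `j ≥ 1`. -/
theorem determining_iff_Vsup_ne_zero {p : ℕ} (hp : 1 ≤ p)
    (κ : ℕ → Fin p → ℕ) (hκ : IsGLexEnum κ)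
    (K : Set (Fin p → ℂ)) (hK : IsCompact K) :
    Determining K ↔ ∀ j : ℕ, 1 ≤ j → Vsup κ K j ≠ 0 :=
  determining_iff_Vsup_ne_zero_general κ hκ K hK

end PseudoLeja
end

section
/- Let p ≥ 1, h_d = C(p+d, d) and l_d = p·C(p+d, p+1). If (M_j)_{j≥1} is a sequence of real numbers with M_j ≥ 1 for all j and lim_{d→∞} (max_{h_{d−1}≤j<h_d} M_j)^{1/d} = 1, then lim_{d→∞} (∏_{j=1}^{h_d−1} M_j)^{1/l_d} = 1. -/
/-!
Split the indices `1 ≤ j < h_d` into the degree blocks `h_{e-1} ≤ j < h_e`, `1 ≤ e ≤ d`.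
Block `e` has `h_e - h_{e-1} = C(p+e-1, e)` indices, each with `log M_j ≤ log S_e`, where `S_e`
is the maximum of `M` on the block. Since `l_d = ∑_{e ≤ d} e · C(p+e-1, e)`, the ratio
`log (∏ M_j) / l_d` is bounded by a weighted Cesàro mean of `(log S_e) / e`, and these tend to `0`
by the growth hypothesis.
-/

open scoped BigOperators
open Filter

namespace PseudoLeja

open Finset Asymptotics Real Topology

theorem _root_.Finset.sum_Ico_le_sum_nsmul_of_monotone {β : Type*} [AddCommMonoid β]
    [PartialOrder β] [IsOrderedAddMonoid β] {h : ℕ → ℕ} (hh : Monotone h) {f c : ℕ → β}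
    (hf : ∀ e, ∀ j ∈ Ico (h e) (h (e + 1)), f j ≤ c e) (d : ℕ) :
    ∑ j ∈ Ico (h 0) (h d), f j ≤ ∑ e ∈ range d, (h (e + 1) - h e) • c e := by
  induction d with
  | zero => simp
  | succ d ih =>
    rw [← sum_Ico_consecutive _ (hh d.zero_le) (hh d.le_succ), sum_range_succ]
    refine add_le_add ih ?_
    simpa only [Nat.card_Ico] using sum_le_card_nsmul _ _ _ (hf d)

theorem _root_.Asymptotics.isLittleO_log_of_tendsto_rpow_inv {u : ℕ → ℝ}
    (hu : ∀ᶠ d in atTop, 0 < u d) (h : Tendsto (fun d : ℕ => u d ^ (d : ℝ)⁻¹) atTop (𝓝 1)) :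
    (fun d => log (u d)) =o[atTop] fun d => (d : ℝ) := by
  rw [isLittleO_iff_tendsto' ((eventually_ne_atTop 0).mono fun d hd h0 =>
    absurd (Nat.cast_eq_zero.1 h0) hd)]
  have := (continuousAt_log one_ne_zero).tendsto.comp h
  rw [log_one] at this
  refine this.congr' ?_
  filter_upwards [hu] with d hd
  rw [Function.comp_apply, log_rpow hd, inv_mul_eq_div]

theorem hdim_zero (p : ℕ) : hdim p 0 = 1 := Nat.choose_zero_right p

theorem one_le_hdim (p d : ℕ) : 1 ≤ hdim p d := Nat.choose_pos (Nat.le_add_left d p)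

theorem hdim_succ (p d : ℕ) : hdim p (d + 1) = hdim p d + (p + d).choose (d + 1) := by
  rw [hdim, hdim, ← add_assoc, Nat.choose_succ_succ']

theorem hdim_lt_succ {p : ℕ} (hp : 1 ≤ p) (d : ℕ) : hdim p d < hdim p (d + 1) := by
  rw [hdim_succ]
  exact Nat.lt_add_of_pos_right (Nat.choose_pos (by omega))

theorem hdim_monotone (p : ℕ) : Monotone (hdim p) :=
  monotone_nat_of_le_succ fun d => (hdim_succ p d).symm ▸ Nat.le_add_right _ _

theorem ldim_succ (p d : ℕ) : ldim p (d + 1) = ldim p d + (p + d).choose (d + 1) * (d + 1) := by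
  have h := Nat.choose_succ_right_eq (p + d) d
  rw [← Nat.choose_symm_add, Nat.add_sub_cancel] at h
  rw [ldim, ldim, ← add_assoc, Nat.choose_succ_succ', h]
  ring

theorem ldim_eq_sum (p d : ℕ) : ldim p d = ∑ e ∈ range d, (p + e).choose (e + 1) * (e + 1) := by
  induction d with
  | zero => simp [ldim]
  | succ d ih => rw [ldim_succ, ih, sum_range_succ]

theorem le_ldim {p : ℕ} (hp : 1 ≤ p) (d : ℕ) : d ≤ ldim p d := by
  rw [ldim_eq_sum]
  simpa using card_nsmul_le_sum (range d) _ 1 fun e _ =>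
    Nat.one_le_iff_ne_zero.2 (Nat.mul_ne_zero (Nat.choose_pos (by omega)).ne' e.succ_ne_zero)

noncomputable def blockSup (p : ℕ) (M : ℕ → ℝ) (d : ℕ) : ℝ :=
  sSup (M '' Set.Ico (hdim p (d - 1)) (hdim p d))

theorem le_blockSup_succ (p : ℕ) (M : ℕ → ℝ) {d j : ℕ}
    (hj : j ∈ Ico (hdim p d) (hdim p (d + 1))) : M j ≤ blockSup p M (d + 1) :=
  le_csSup ((Set.finite_Ico _ _).image M).bddAbove ⟨j, by simpa using hj, rfl⟩

theorem one_le_blockSup_succ {p : ℕ} (hp : 1 ≤ p) {M : ℕ → ℝ} (hM : ∀ j, 1 ≤ j → 1 ≤ M j)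
    (d : ℕ) : 1 ≤ blockSup p M (d + 1) :=
  (hM _ (one_le_hdim p d)).trans <|
    le_blockSup_succ p M <| mem_Ico.2 ⟨le_rfl, hdim_lt_succ hp d⟩

theorem isLittleO_log_blockSup_succ {p : ℕ} (hp : 1 ≤ p) {M : ℕ → ℝ}
    (hM : ∀ j, 1 ≤ j → 1 ≤ M j)
    (hgrowth : Tendsto (fun d : ℕ => blockSup p M d ^ (d : ℝ)⁻¹) atTop (𝓝 1)) :
    (fun d => log (blockSup p M (d + 1))) =o[atTop] fun d => ((d + 1 : ℕ) : ℝ) := by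
  refine (isLittleO_log_of_tendsto_rpow_inv ?_ hgrowth).comp_tendsto (tendsto_add_atTop_nat 1)
  filter_upwards [eventually_ge_atTop 1] with d hd
  obtain ⟨d, rfl⟩ := Nat.exists_eq_add_of_le' hd
  exact zero_lt_one.trans_le (one_le_blockSup_succ hp hM d)

theorem sum_log_le_sum_choose_mul_log_blockSup {p : ℕ} {M : ℕ → ℝ} (hM : ∀ j, 1 ≤ j → 1 ≤ M j)
    (d : ℕ) : ∑ j ∈ Ico 1 (hdim p d), log (M j) ≤
      ∑ e ∈ range d, ((p + e).choose (e + 1) : ℝ) * log (blockSup p M (e + 1)) := by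
  have h := sum_Ico_le_sum_nsmul_of_monotone (hdim_monotone p) (f := fun j => log (M j))
    (c := fun e => log (blockSup p M (e + 1))) (fun e j hj => log_le_log
      (zero_lt_one.trans_le (hM j ((one_le_hdim p e).trans (mem_Ico.1 hj).1)))
      (le_blockSup_succ p M hj)) d
  simpa only [hdim_zero, hdim_succ, Nat.add_sub_cancel_left, nsmul_eq_mul] using h

theorem isLittleO_sum_choose_mul_log_blockSup {p : ℕ} (hp : 1 ≤ p) {M : ℕ → ℝ}
    (hM : ∀ j, 1 ≤ j → 1 ≤ M j)
    (hgrowth : Tendsto (fun d : ℕ => blockSup p M d ^ (d : ℝ)⁻¹) atTop (𝓝 1)) :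
    (fun d => ∑ e ∈ range d, ((p + e).choose (e + 1) : ℝ) * log (blockSup p M (e + 1)))
      =o[atTop] fun d => (ldim p d : ℝ) := by
  have hldim : (fun d => (ldim p d : ℝ)) =
      fun d => ∑ e ∈ range d, ((p + e).choose (e + 1) : ℝ) * ((e + 1 : ℕ) : ℝ) := by
    funext d
    rw [ldim_eq_sum, Nat.cast_sum]
    simp only [Nat.cast_mul]
  rw [hldim]
  refine ((isBigO_refl _ atTop).mul_isLittleO
    (isLittleO_log_blockSup_succ hp hM hgrowth)).sum_range (fun e => by positivity) ?_
  rw [← hldim]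
  exact tendsto_natCast_atTop_atTop.comp (tendsto_atTop_mono (le_ldim hp) tendsto_id)

/-- if `(M_j)` satisfies the Edrei growth condition, then
`(∏_{j=1}^{h_d-1} M_j)^{1/l_d} → 1`. -/
theorem prod_edrei_growth_tendsto_one {p : ℕ} (hp : 1 ≤ p) (M : ℕ → ℝ)
    (hM : ∀ j : ℕ, 1 ≤ j → 1 ≤ M j)
    (hgrowth : Filter.Tendsto
      (fun d : ℕ => (sSup (M '' Set.Ico (hdim p (d - 1)) (hdim p d))) ^ ((d : ℝ)⁻¹))
      Filter.atTop (nhds 1)) :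
    Filter.Tendsto
      (fun d : ℕ => (∏ j ∈ Finset.Ico 1 (hdim p d), M j) ^ (((ldim p d : ℝ))⁻¹))
      Filter.atTop (nhds 1) := by
  have hlog : Tendsto (fun d => (∑ j ∈ Ico 1 (hdim p d), log (M j)) / ldim p d) atTop (𝓝 0) :=
    squeeze_zero
      (fun d => div_nonneg (sum_nonneg fun j hj => log_nonneg (hM j (mem_Ico.1 hj).1))
        (Nat.cast_nonneg _))
      (fun d => div_le_div_of_nonneg_right (sum_log_le_sum_choose_mul_log_blockSup hM d)
        (Nat.cast_nonneg _))
      (isLittleO_sum_choose_mul_log_blockSup hp hM hgrowth).tendsto_div_nhds_zero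
  have hexp := (continuous_exp.tendsto 0).comp hlog
  rw [exp_zero] at hexp
  refine hexp.congr fun d => ?_
  have hMpos : ∀ j ∈ Ico 1 (hdim p d), 0 < M j := fun j hj =>
    zero_lt_one.trans_le (hM j (mem_Ico.1 hj).1)
  rw [Function.comp_apply, rpow_def_of_pos (prod_pos hMpos),
    log_prod fun j hj => (hMpos j hj).ne', div_eq_mul_inv]

end PseudoLeja
end

section
/- Let X = (x_0,…,x_{N−1}) be a completely ordered unisolvent array of points in ℂ^p. Then for each 1 ≤ j ≤ N−1 there exist (unique) complex numbers c^{(j)}_0,…,c^{(j)}_{j−1} such that e_j(x_i) = ∑_{t=0}^{j−1} c^{(j)}_t e_t(x_i) for all 0 ≤ i ≤ j−1 (i.e. ∑_t c^{(j)}_t e_t is the Lagrange interpolant L_{X_j}e_j of e_j at x_0,…,x_{j−1}), and vdm(x_0,…,x_{N−1}) = ∏_{j=1}^{N−1} ( e_j(x_j) − ∑_{t=0}^{j−1} c^{(j)}_t e_t(x_j) ). -/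
/-!
Subtracting from the last column of the Vandermonde matrix of `x_0, …, x_j` the combination
`∑_{t<j} c^{(j)}_t e_t` of the earlier columns leaves that column zero except for the entry
`e_j(x_j) - L_{X_j}e_j(x_j)` in the corner, because the interpolant agrees with `e_j` at
`x_0, …, x_{j-1}`. Expanding along that column gives
`vdm(x_0, …, x_j) = vdm(x_0, …, x_{j-1}) · (e_j(x_j) - L_{X_j}e_j(x_j))`, and the product
formula follows by induction from `vdm(x_0) = e_0(x_0) = 1`.
-/

open scoped BigOperators
open Filter

open Finset Matrix

namespace Matrix

variable {R : Type*} [CommRing R] {n : ℕ}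

theorem det_updateCol_last_single (A : Matrix (Fin (n + 1)) (Fin (n + 1)) R) (r : R) :
    (A.updateCol (Fin.last n) (Pi.single (Fin.last n) r)).det =
      r * (A.submatrix Fin.castSucc Fin.castSucc).det := by
  have hminor : (A.updateCol (Fin.last n) (Pi.single (Fin.last n) r)).submatrix
      Fin.castSucc Fin.castSucc = A.submatrix Fin.castSucc Fin.castSucc := by
    ext i j
    simp [(Fin.castSucc_lt_last j).ne]
  rw [det_succ_column _ (Fin.last n), Fin.sum_univ_castSucc]
  simp [hminor, (Fin.castSucc_lt_last _).ne]

theorem det_eq_det_submatrix_castSucc_mul_sub (A : Matrix (Fin (n + 1)) (Fin (n + 1)) R)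
    (c : Fin n → R)
    (hc : ∀ i : Fin n, A i.castSucc (Fin.last n) = ∑ t, c t * A i.castSucc t.castSucc) :
    A.det = (A.submatrix Fin.castSucc Fin.castSucc).det *
      (A (Fin.last n) (Fin.last n) - ∑ t, c t * A (Fin.last n) t.castSucc) := by
  set d : Fin (n + 1) → R := Fin.lastCases 1 fun t => -c t
  have hcol : (fun k => ∑ t, d t • A k t) = Pi.single (Fin.last n)
      (A (Fin.last n) (Fin.last n) - ∑ t, c t * A (Fin.last n) t.castSucc) := by
    ext k
    induction k using Fin.lastCases with
    | last => simp [d, Fin.sum_univ_castSucc, sub_eq_neg_add]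
    | cast i => simp [d, Fin.sum_univ_castSucc, hc, Fin.castSucc_ne_last]
  have hdet := det_updateCol_sum A (Fin.last n) d
  rw [hcol, det_updateCol_last_single] at hdet
  rw [mul_comm, hdet, smul_eq_mul]
  simp [d]

end Matrix

namespace PseudoLeja

theorem not_gLexLT_zero {p : ℕ} (α : Fin p → ℕ) : ¬ GLexLT α 0 := by
  rintro (h | ⟨-, k, -, hk⟩)
  · simp at h
  · exact Nat.not_lt_zero _ hk

theorem IsGLexEnum.apply_zero {p : ℕ} {κ : ℕ → Fin p → ℕ} (hκ : IsGLexEnum κ) : κ 0 = 0 := by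
  obtain ⟨n, hn⟩ := hκ.1.2 0
  rcases Nat.eq_zero_or_pos n with rfl | hpos
  · exact hn
  · exact absurd (hn ▸ hκ.2 0 n hpos) (not_gLexLT_zero _)

variable {p : ℕ} (κ : ℕ → Fin p → ℕ) (X : ℕ → Fin p → ℂ)

noncomputable def vdmMatrix (n : ℕ) : Matrix (Fin n) (Fin n) ℂ :=
  Matrix.of fun M N : Fin n => mono κ N (X M)

theorem vdmMatrix_mulVec_apply {n : ℕ} (c : ℕ → ℂ) (i : Fin n) :
    (vdmMatrix κ X n *ᵥ fun t => c t) i = ∑ t ∈ range n, c t * mono κ t (X i) := by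
  rw [← Fin.sum_univ_eq_sum_range (fun t => c t * mono κ t (X i))]
  simp only [mulVec, dotProduct, vdmMatrix, of_apply, mul_comm]

theorem interpolates_iff_mulVec {j : ℕ} (c : ℕ → ℂ) :
    (∀ i < j, mono κ j (X i) = ∑ t ∈ range j, c t * mono κ t (X i)) ↔
      (vdmMatrix κ X j *ᵥ fun t => c t) = fun i : Fin j => mono κ j (X i) := by
  simp only [funext_iff, vdmMatrix_mulVec_apply, Fin.forall_iff, eq_comm]

theorem vdm_one (hκ : IsGLexEnum κ) : vdm κ 1 X = 1 := by
  simp [vdm, mono, hκ.apply_zero]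

theorem vdm_succ {j : ℕ} (c : ℕ → ℂ)
    (hc : ∀ i < j, mono κ j (X i) = ∑ t ∈ range j, c t * mono κ t (X i)) :
    vdm κ (j + 1) X = vdm κ j X * (mono κ j (X j) - ∑ t ∈ range j, c t * mono κ t (X j)) := by
  have hsum (z : Fin p → ℂ) : ∑ t ∈ range j, c t * mono κ t z = ∑ t : Fin j, c t * mono κ t z :=
    (Fin.sum_univ_eq_sum_range (fun t => c t * mono κ t z) j).symm
  simp only [hsum] at hc ⊢
  exact det_eq_det_submatrix_castSucc_mul_sub (vdmMatrix κ X (j + 1)) (fun t => c t)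
    fun i => hc i i.2

theorem vdm_eq_prod_of_interpolates (hκ : IsGLexEnum κ) {n : ℕ} (c : ℕ → ℕ → ℂ)
    (hc : ∀ j, 1 ≤ j → j < n → ∀ i < j,
      mono κ j (X i) = ∑ t ∈ range j, c j t * mono κ t (X i)) :
    vdm κ n X = ∏ j ∈ Ico 1 n, (mono κ j (X j) - ∑ t ∈ range j, c j t * mono κ t (X j)) := by
  induction n with
  | zero => simp [vdm]
  | succ n ih =>
    rcases Nat.eq_zero_or_pos n with rfl | hn
    · simp [vdm_one κ X hκ]
    · rw [vdm_succ κ X (c n) (hc n hn n.lt_succ_self), prod_Ico_succ_top hn,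
        ih fun j hj hjn => hc j hj (hjn.trans n.lt_succ_self)]

/-- The coefficients of `L_{X_j} e_j` in the basis `e_0, …, e_{j-1}`; junk unless
`vdm κ j X ≠ 0`. -/
noncomputable def interpCoeff (j : ℕ) (t : ℕ) : ℂ :=
  if h : t < j then ((vdmMatrix κ X j)⁻¹ *ᵥ fun i => mono κ j (X i)) ⟨t, h⟩ else 0

theorem interpCoeff_fin {j : ℕ} :
    (fun t : Fin j => interpCoeff κ X j t) = (vdmMatrix κ X j)⁻¹ *ᵥ fun i => mono κ j (X i) := by
  ext t
  simp [interpCoeff]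

variable {κ X}

theorem interpolates_interpCoeff {j : ℕ} (h : vdm κ j X ≠ 0) :
    ∀ i < j, mono κ j (X i) = ∑ t ∈ range j, interpCoeff κ X j t * mono κ t (X i) := by
  rw [interpolates_iff_mulVec, interpCoeff_fin, mulVec_mulVec,
    mul_nonsing_inv (vdmMatrix κ X j) (isUnit_iff_ne_zero.2 h), one_mulVec]

theorem eq_interpCoeff_of_interpolates {j : ℕ} (h : vdm κ j X ≠ 0) {c : ℕ → ℂ}
    (hc : ∀ i < j, mono κ j (X i) = ∑ t ∈ range j, c t * mono κ t (X i)) :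
    ∀ t < j, c t = interpCoeff κ X j t := by
  rw [interpolates_iff_mulVec] at hc
  have hsol : (fun t : Fin j => c t) = fun t : Fin j => interpCoeff κ X j t := by
    rw [interpCoeff_fin, ← hc, mulVec_mulVec,
      nonsing_inv_mul (vdmMatrix κ X j) (isUnit_iff_ne_zero.2 h), one_mulVec]
  exact fun t ht => congrFun hsol ⟨t, ht⟩

theorem vdm_eq_prod_newton_remainders_general {p N : ℕ}
    (κ : ℕ → Fin p → ℕ) (hκ : IsGLexEnum κ)
    (X : ℕ → Fin p → ℂ)
    (hX : ∀ i : ℕ, 1 ≤ i → i ≤ N → vdm κ i X ≠ 0) :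
    ∃ c : ℕ → ℕ → ℂ,
      (∀ j : ℕ, 1 ≤ j → j < N → ∀ i : ℕ, i < j →
        mono κ j (X i) = ∑ t ∈ Finset.range j, c j t * mono κ t (X i)) ∧
      (∀ c' : ℕ → ℕ → ℂ,
        (∀ j : ℕ, 1 ≤ j → j < N → ∀ i : ℕ, i < j →
          mono κ j (X i) = ∑ t ∈ Finset.range j, c' j t * mono κ t (X i)) →
        ∀ j : ℕ, 1 ≤ j → j < N → ∀ t : ℕ, t < j → c' j t = c j t) ∧
      vdm κ N X =
        ∏ j ∈ Finset.Ico 1 N,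
          (mono κ j (X j) - ∑ t ∈ Finset.range j, c j t * mono κ t (X j)) := by
  have hinterp : ∀ j, 1 ≤ j → j < N → ∀ i < j,
      mono κ j (X i) = ∑ t ∈ range j, interpCoeff κ X j t * mono κ t (X i) :=
    fun j hj hjN => interpolates_interpCoeff (hX j hj hjN.le)
  exact ⟨interpCoeff κ X, hinterp,
    fun c' hc' j hj hjN => eq_interpCoeff_of_interpolates (hX j hj hjN.le) (hc' j hj hjN),
    vdm_eq_prod_of_interpolates κ X hκ _ hinterp⟩

/-- for a completely ordered unisolvent array `X = (x_0,…,x_{N-1})`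
there are (unique) coefficients `c^{(j)}_t` making `∑_{t<j} c^{(j)}_t e_t` the Lagrange
interpolant of `e_j` at `x_0,…,x_{j-1}`, and
`vdm(x_0,…,x_{N-1}) = ∏_{j=1}^{N-1} (e_j(x_j) - ∑_{t<j} c^{(j)}_t e_t(x_j))`. -/
theorem vdm_eq_prod_newton_remainders {p N : ℕ} (hp : 1 ≤ p)
    (κ : ℕ → Fin p → ℕ) (hκ : IsGLexEnum κ)
    (X : ℕ → Fin p → ℂ)
    (hX : ∀ i : ℕ, 1 ≤ i → i ≤ N → vdm κ i X ≠ 0) :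
    ∃ c : ℕ → ℕ → ℂ,
      (∀ j : ℕ, 1 ≤ j → j < N → ∀ i : ℕ, i < j →
        mono κ j (X i) = ∑ t ∈ Finset.range j, c j t * mono κ t (X i)) ∧
      (∀ c' : ℕ → ℕ → ℂ,
        (∀ j : ℕ, 1 ≤ j → j < N → ∀ i : ℕ, i < j →
          mono κ j (X i) = ∑ t ∈ Finset.range j, c' j t * mono κ t (X i)) →
        ∀ j : ℕ, 1 ≤ j → j < N → ∀ t : ℕ, t < j → c' j t = c j t) ∧
      vdm κ N X =
        ∏ j ∈ Finset.Ico 1 N,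
          (mono κ j (X j) - ∑ t ∈ Finset.range j, c j t * mono κ t (X j)) :=
  vdm_eq_prod_newton_remainders_general κ hκ X hX

end PseudoLeja
end

section
/- Let p = p_1 + p_2; let κ^{(p)}, κ^{(p_1)}, κ^{(p_2)} be the graded lexicographic enumerations of ℕ^p, ℕ^{p_1}, ℕ^{p_2}, and define φ = (φ_1, φ_2) : ℕ → ℕ² by κ^{(p)}(j) = (κ^{(p_1)}(φ_1(j)), κ^{(p_2)}(φ_2(j))) (concatenation of multi-indices). Let A = (a_j) ⊆ ℂ^{p_1} and B = (b_j) ⊆ ℂ^{p_2} be sequences such that every initial segment A_j = (a_0,…,a_{j−1}) and B_j = (b_0,…,b_{j−1}) is completely ordered unisolvent, let Ω = A ⊕ B be the intertwining sequence ω_j = (a_{φ_1(j)}, b_{φ_2(j)}), and assume every initial segment Ω_j is completely ordered unisolvent. Fix j ∈ ℕ and let c, c', c'' be the coefficient vectors (in the respective monomial bases) of the Lagrange interpolants of e_j^{(p)} at Ω_j, of e_{φ_1(j)}^{(p_1)} at A_{φ_1(j)}, and of e_{φ_2(j)}^{(p_2)} at B_{φ_2(j)}. Then for all z = (z^1, z^2)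 ∈ ℂ^{p_1} × ℂ^{p_2}: e_j^{(p)}(z) − ∑_{t<j} c_t e_t^{(p)}(z) = ( e_{φ_1(j)}^{(p_1)}(z^1) − ∑_{t<φ_1(j)} c'_t e_t^{(p_1)}(z^1) ) · ( e_{φ_2(j)}^{(p_2)}(z^2) − ∑_{t<φ_2(j)} c''_t e_t^{(p_2)}(z^2) ). -/
open scoped BigOperators
open Filter

namespace PseudoLeja

/-! Expanding the two remainders, their product is `e_j` minus a combination of monomials
`e_s^{(p₁)}(z₁) e_t^{(p₂)}(z₂) = e_u^{(p)}(z)` with `s ≤ φ₁ j`, `t ≤ φ₂ j`, `(s, t) ≠ (φ₁ j, φ₂ j)`;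
appending multi-indices is monotone for the graded lexicographic order, so all these `u` are
`< j`. Conversely `i < j` forces `φ₁ i < φ₁ j` or `φ₂ i < φ₂ j`, so one of the two factors
vanishes at `ω_i`. Both sides are thus `e_j` minus an element of `span {e_u : u < j}` vanishing
on `Ω_j`, and such a function is unique since the Vandermonde matrix of `Ω_j` is invertible. -/

section GLex

variable {p p₁ p₂ : ℕ}

theorem GLexLT.sum_le {α β : Fin p → ℕ} (h : GLexLT α β) : ∑ i, α i ≤ ∑ i, β i := by
  rcases h with h | ⟨h, _⟩ <;> omega

theorem GLexLT.asymm {α β : Fin p → ℕ} (h : GLexLT α β) : ¬ GLexLT β α := by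
  rintro (h' | ⟨hs', k', hk', hlt'⟩)
  · have := h.sum_le; omega
  rcases h with h | ⟨-, k, hk, hlt⟩
  · omega
  rcases lt_trichotomy k k' with hkk | rfl | hkk
  · have := hk' k hkk; omega
  · omega
  · have := hk k' hkk; omega

theorem GLexLT.irrefl (α : Fin p → ℕ) : ¬ GLexLT α α := fun h => h.asymm h

theorem sum_append (α : Fin p₁ → ℕ) (β : Fin p₂ → ℕ) :
    ∑ i, Fin.append α β i = ∑ i, α i + ∑ i, β i := by
  simp [Fin.sum_univ_add]

theorem GLexLT.append_left {α₁ β₁ : Fin p₁ → ℕ} {α₂ β₂ : Fin p₂ → ℕ} (h₁ : GLexLT α₁ β₁)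
    (h₂ : GLexLT α₂ β₂ ∨ α₂ = β₂) : GLexLT (Fin.append α₁ α₂) (Fin.append β₁ β₂) := by
  have h₂' : ∑ i, α₂ i ≤ ∑ i, β₂ i := by
    rcases h₂ with h₂ | rfl
    exacts [h₂.sum_le, le_rfl]
  simp only [GLexLT, sum_append]
  rcases h₁ with h₁ | ⟨hs, k, hk, hlt⟩
  · omega
  rcases h₂'.lt_or_eq with h₂' | h₂'
  · omega
  refine Or.inr ⟨by omega, Fin.castAdd p₂ k, fun i hi => ?_, by simpa using hlt⟩
  induction i using Fin.addCases with
  | left i => simpa using hk i hi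
  | right i => exact absurd hi (by simp [Fin.lt_def]; omega)

theorem GLexLT.append_right (α : Fin p₁ → ℕ) {α₂ β₂ : Fin p₂ → ℕ} (h : GLexLT α₂ β₂) :
    GLexLT (Fin.append α α₂) (Fin.append α β₂) := by
  simp only [GLexLT, sum_append]
  rcases h with h | ⟨hs, k, hk, hlt⟩
  · omega
  refine Or.inr ⟨by omega, Fin.natAdd p₁ k, fun i hi => ?_, by simpa using hlt⟩
  induction i using Fin.addCases with
  | left i => simp
  | right i => simpa using hk i (by simpa using hi)

end GLex

section Enumeration

variable {p p₁ p₂ : ℕ}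

theorem lt_of_glexLT {κ : ℕ → Fin p → ℕ} (hκ : ∀ m n, m < n → GLexLT (κ m) (κ n))
    {m n : ℕ} (h : GLexLT (κ m) (κ n)) : m < n := by
  by_contra! hnm
  rcases hnm.lt_or_eq with hnm | rfl
  · exact h.asymm (hκ _ _ hnm)
  · exact GLexLT.irrefl _ h

variable {κ : ℕ → Fin (p₁ + p₂) → ℕ} {κ₁ : ℕ → Fin p₁ → ℕ} {κ₂ : ℕ → Fin p₂ → ℕ}

theorem lt_of_append_eq (hκ : ∀ m n, m < n → GLexLT (κ m) (κ n))
    (hκ₁ : ∀ m n, m < n → GLexLT (κ₁ m) (κ₁ n)) (hκ₂ : ∀ m n, m < n → GLexLT (κ₂ m) (κ₂ n))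
    {m n s t s' t' : ℕ} (hm : κ m = Fin.append (κ₁ s) (κ₂ t))
    (hn : κ n = Fin.append (κ₁ s') (κ₂ t')) (hs : s ≤ s') (ht : t ≤ t')
    (hst : s < s' ∨ t < t') : m < n := by
  refine lt_of_glexLT hκ ?_
  rw [hm, hn]
  rcases hs.lt_or_eq with hs | rfl
  · refine (hκ₁ s s' hs).append_left ?_
    rcases ht.lt_or_eq with ht | rfl
    exacts [Or.inl (hκ₂ t t' ht), Or.inr rfl]
  · exact (hκ₂ t t' (hst.resolve_left (lt_irrefl s))).append_right _

theorem lt_or_lt_of_append_eq (hκ : ∀ m n, m < n → GLexLT (κ m) (κ n))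
    (hκ₁ : ∀ m n, m < n → GLexLT (κ₁ m) (κ₁ n)) (hκ₂ : ∀ m n, m < n → GLexLT (κ₂ m) (κ₂ n))
    {m n s t s' t' : ℕ} (hm : κ m = Fin.append (κ₁ s) (κ₂ t))
    (hn : κ n = Fin.append (κ₁ s') (κ₂ t')) (hmn : m < n) : s < s' ∨ t < t' := by
  by_contra! h
  rcases h.1.lt_or_eq with hs | rfl
  · exact (lt_of_append_eq hκ hκ₁ hκ₂ hn hm h.1 h.2 (Or.inl hs)).not_gt hmn
  rcases h.2.lt_or_eq with ht | rfl
  · exact (lt_of_append_eq hκ hκ₁ hκ₂ hn hm le_rfl h.2 (Or.inr ht)).not_gt hmn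
  · have h := hκ m n hmn
    rw [hm, ← hn] at h
    exact GLexLT.irrefl _ h

end Enumeration

section Span

open Submodule

variable {R M : Type*} [CommSemiring R] [AddCommMonoid M] [Module R M]

theorem mem_span_image_Iio_iff {F : ℕ → M} {n : ℕ} {x : M} :
    x ∈ span R (F '' Set.Iio n) ↔ ∃ c : ℕ → R, ∑ t ∈ Finset.range n, c t • F t = x := by
  constructor
  · rw [← Finset.coe_range, Finsupp.mem_span_image_iff_linearCombination]
    rintro ⟨l, hl, rfl⟩
    exact ⟨l, (Finsupp.linearCombination_apply_of_mem_supported R hl).symm⟩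
  · rintro ⟨c, rfl⟩
    exact sum_smul_mem _ c fun t ht => subset_span ⟨t, Finset.mem_range.1 ht, rfl⟩

variable (R) {X Y : Type*}

def mulPair : (X → R) →ₗ[R] (Y → R) →ₗ[R] (X × Y → R) :=
  (LinearMap.mul R (X × Y → R)).compl₁₂ (LinearMap.funLeft R R Prod.fst)
    (LinearMap.funLeft R R Prod.snd)

@[simp]
theorem mulPair_apply (f : X → R) (g : Y → R) (z : X × Y) : mulPair R f g z = f z.1 * g z.2 :=
  rfl

end Span

section Monomials

open Submodule

variable {p p₁ p₂ : ℕ}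

noncomputable def newtonRemainder (κ : ℕ → Fin p → ℕ) (n : ℕ) (c : ℕ → ℂ) (z : Fin p → ℂ) : ℂ :=
  mono κ n z - ∑ t ∈ Finset.range n, c t * mono κ t z

theorem newtonRemainder_eq_zero_iff {κ : ℕ → Fin p → ℕ} {n : ℕ} {c : ℕ → ℂ} {z : Fin p → ℂ} :
    newtonRemainder κ n c z = 0 ↔ mono κ n z = ∑ t ∈ Finset.range n, c t * mono κ t z :=
  sub_eq_zero

theorem newtonRemainder_eq_sub (κ : ℕ → Fin p → ℕ) (n : ℕ) (c : ℕ → ℂ) :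
    newtonRemainder κ n c = mono κ n - ∑ t ∈ Finset.range n, c t • mono κ t := by
  funext z
  simp [newtonRemainder, Finset.sum_apply]

theorem coeff_eq_of_vdm_ne_zero {κ : ℕ → Fin p → ℕ} {n : ℕ} {ξ : ℕ → Fin p → ℂ}
    (hV : vdm κ n ξ ≠ 0) {c d : ℕ → ℂ}
    (h : ∀ i < n, ∑ t ∈ Finset.range n, c t * mono κ t (ξ i) =
      ∑ t ∈ Finset.range n, d t * mono κ t (ξ i))
    {t : ℕ} (ht : t < n) : c t = d t := by
  have hmulVec : (Matrix.of fun M N : Fin n => mono κ N (ξ M)).mulVec (fun u => c u) =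
      (Matrix.of fun M N : Fin n => mono κ N (ξ M)).mulVec (fun u => d u) := by
    funext i
    simp only [Matrix.mulVec, dotProduct, Matrix.of_apply, mul_comm (mono κ _ _)]
    rw [Fin.sum_univ_eq_sum_range (fun t => c t * mono κ t (ξ i)),
      Fin.sum_univ_eq_sum_range (fun t => d t * mono κ t (ξ i))]
    exact h i i.2
  exact congrFun (Matrix.mulVec_injective_of_det_ne_zero hV hmulVec) ⟨t, ht⟩

theorem newtonRemainder_eq_of_vdm_ne_zero {κ : ℕ → Fin p → ℕ} {n : ℕ} {ξ : ℕ → Fin p → ℂ}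
    (hV : vdm κ n ξ ≠ 0) {c d : ℕ → ℂ} (hc : ∀ i < n, newtonRemainder κ n c (ξ i) = 0)
    (hd : ∀ i < n, newtonRemainder κ n d (ξ i) = 0) :
    newtonRemainder κ n c = newtonRemainder κ n d := by
  have hcd : ∀ t < n, c t = d t := fun t => coeff_eq_of_vdm_ne_zero hV fun i hi =>
    (newtonRemainder_eq_zero_iff.1 (hc i hi)).symm.trans (newtonRemainder_eq_zero_iff.1 (hd i hi))
  funext z
  exact congrArg (_ - ·) (Finset.sum_congr rfl fun t ht => by rw [hcd t (Finset.mem_range.1 ht)])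

noncomputable def monoAppend (κ : ℕ → Fin (p₁ + p₂) → ℕ) (u : ℕ) :
    (Fin p₁ → ℂ) × (Fin p₂ → ℂ) → ℂ :=
  fun z => mono κ u (Fin.append z.1 z.2)

variable {κ : ℕ → Fin (p₁ + p₂) → ℕ} {κ₁ : ℕ → Fin p₁ → ℕ} {κ₂ : ℕ → Fin p₂ → ℕ}

theorem mulPair_mono {u s t : ℕ} (hu : κ u = Fin.append (κ₁ s) (κ₂ t)) :
    mulPair ℂ (mono κ₁ s) (mono κ₂ t) = monoAppend κ u := by
  funext z
  simp [monoAppend, mono, hu, Fin.prod_univ_add]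

theorem map₂_mulPair_span_le (hκ : Function.Surjective κ) {S₁ S₂ T : Set ℕ}
    (h : ∀ s ∈ S₁, ∀ t ∈ S₂, ∀ u, κ u = Fin.append (κ₁ s) (κ₂ t) → u ∈ T) :
    map₂ (mulPair ℂ) (span ℂ (mono κ₁ '' S₁)) (span ℂ (mono κ₂ '' S₂)) ≤
      span ℂ (monoAppend κ '' T) := by
  rw [map₂_span_span, span_le]
  rintro _ ⟨_, ⟨s, hs, rfl⟩, _, ⟨t, ht, rfl⟩, rfl⟩
  obtain ⟨u, hu⟩ := hκ (Fin.append (κ₁ s) (κ₂ t))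
  exact subset_span ⟨u, h s hs t ht u hu, (mulPair_mono hu).symm⟩

theorem exists_newtonRemainder_eq_mul (hκ : ∀ m n, m < n → GLexLT (κ m) (κ n))
    (hκsurj : Function.Surjective κ) (hκ₁ : ∀ m n, m < n → GLexLT (κ₁ m) (κ₁ n))
    (hκ₂ : ∀ m n, m < n → GLexLT (κ₂ m) (κ₂ n)) {j s₀ t₀ : ℕ}
    (hj : κ j = Fin.append (κ₁ s₀) (κ₂ t₀)) (c₁ c₂ : ℕ → ℂ) :
    ∃ c : ℕ → ℂ, ∀ z₁ z₂, newtonRemainder κ₁ s₀ c₁ z₁ * newtonRemainder κ₂ t₀ c₂ z₂ =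
      newtonRemainder κ j c (Fin.append z₁ z₂) := by
  set P₁ := ∑ t ∈ Finset.range s₀, c₁ t • mono κ₁ t
  set P₂ := ∑ t ∈ Finset.range t₀, c₂ t • mono κ₂ t
  have hP₁ : P₁ ∈ span ℂ (mono κ₁ '' Set.Iio s₀) := mem_span_image_Iio_iff.2 ⟨c₁, rfl⟩
  have hP₂ : P₂ ∈ span ℂ (mono κ₂ '' Set.Iio t₀) := mem_span_image_Iio_iff.2 ⟨c₂, rfl⟩
  have hR₂ : newtonRemainder κ₂ t₀ c₂ ∈ span ℂ (mono κ₂ '' Set.Iic t₀) := by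
    rw [newtonRemainder_eq_sub]
    exact sub_mem (subset_span ⟨t₀, Set.mem_Iic.2 le_rfl, rfl⟩)
      (span_mono (Set.image_mono Set.Iio_subset_Iic_self) hP₂)
  have hlower : mulPair ℂ (mono κ₁ s₀) P₂ + mulPair ℂ P₁ (newtonRemainder κ₂ t₀ c₂) ∈
      span ℂ (monoAppend κ '' Set.Iio j) := by
    refine add_mem (map₂_mulPair_span_le hκsurj ?_ (apply_mem_map₂ _ (subset_span
      ⟨s₀, Set.mem_Iic.2 le_rfl, rfl⟩) hP₂)) (map₂_mulPair_span_le hκsurj ?_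
      (apply_mem_map₂ _ hP₁ hR₂))
    · intro s hs t ht u hu
      exact lt_of_append_eq hκ hκ₁ hκ₂ hu hj hs ht.le (Or.inr ht)
    · intro s hs t ht u hu
      exact lt_of_append_eq hκ hκ₁ hκ₂ hu hj hs.le ht (Or.inl hs)
  obtain ⟨c, hc⟩ := mem_span_image_Iio_iff.1 hlower
  have hmul : mulPair ℂ (newtonRemainder κ₁ s₀ c₁) (newtonRemainder κ₂ t₀ c₂) =
      monoAppend κ j - ∑ t ∈ Finset.range j, c t • monoAppend κ t := by
    rw [hc, newtonRemainder_eq_sub κ₁, map_sub, LinearMap.sub_apply, newtonRemainder_eq_sub κ₂,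
      map_sub, mulPair_mono hj]
    abel
  refine ⟨c, fun z₁ z₂ => ?_⟩
  simpa [newtonRemainder, monoAppend, Finset.sum_apply] using congrFun hmul (z₁, z₂)

end Monomials

theorem newton_remainder_intertwining_general {p₁ p₂ : ℕ}
    (κ₁ : ℕ → Fin p₁ → ℕ) (κ₂ : ℕ → Fin p₂ → ℕ) (κ : ℕ → Fin (p₁ + p₂) → ℕ)
    (hκ₁ : IsGLexEnum κ₁) (hκ₂ : IsGLexEnum κ₂) (hκ : IsGLexEnum κ)
    (φ₁ φ₂ : ℕ → ℕ)
    (hφ : ∀ j : ℕ, κ j = Fin.append (κ₁ (φ₁ j)) (κ₂ (φ₂ j)))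
    (a : ℕ → Fin p₁ → ℂ) (b : ℕ → Fin p₂ → ℂ)
    (ω : ℕ → Fin (p₁ + p₂) → ℂ)
    (hω : ∀ j : ℕ, ω j = Fin.append (a (φ₁ j)) (b (φ₂ j)))
    (hΩ : ∀ j : ℕ, 1 ≤ j → vdm κ j ω ≠ 0)
    (j : ℕ) (c c' c'' : ℕ → ℂ)
    (hc : ∀ i : ℕ, i < j →
      mono κ j (ω i) = ∑ t ∈ Finset.range j, c t * mono κ t (ω i))
    (hc' : ∀ i : ℕ, i < φ₁ j →
      mono κ₁ (φ₁ j) (a i) = ∑ t ∈ Finset.range (φ₁ j), c' t * mono κ₁ t (a i))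
    (hc'' : ∀ i : ℕ, i < φ₂ j →
      mono κ₂ (φ₂ j) (b i) = ∑ t ∈ Finset.range (φ₂ j), c'' t * mono κ₂ t (b i)) :
    ∀ (z₁ : Fin p₁ → ℂ) (z₂ : Fin p₂ → ℂ),
      mono κ j (Fin.append z₁ z₂) -
          ∑ t ∈ Finset.range j, c t * mono κ t (Fin.append z₁ z₂) =
        (mono κ₁ (φ₁ j) z₁ - ∑ t ∈ Finset.range (φ₁ j), c' t * mono κ₁ t z₁) *
        (mono κ₂ (φ₂ j) z₂ - ∑ t ∈ Finset.range (φ₂ j), c'' t * mono κ₂ t z₂) := by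
  obtain ⟨d, hd⟩ := exists_newtonRemainder_eq_mul hκ.2 hκ.1.2 hκ₁.2 hκ₂.2 (hφ j) c' c''
  have hV : vdm κ j ω ≠ 0 := by
    rcases Nat.eq_zero_or_pos j with rfl | hj
    · simp [vdm]
    · exact hΩ j hj
  have hd_vanish : ∀ i < j, newtonRemainder κ j d (ω i) = 0 := by
    intro i hi
    rw [hω, ← hd]
    rcases lt_or_lt_of_append_eq hκ.2 hκ₁.2 hκ₂.2 (hφ i) (hφ j) hi with h | h
    · exact mul_eq_zero_of_left (newtonRemainder_eq_zero_iff.2 (hc' _ h)) _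
    · exact mul_eq_zero_of_right _ (newtonRemainder_eq_zero_iff.2 (hc'' _ h))
  have hcd := newtonRemainder_eq_of_vdm_ne_zero hV
    (fun i hi => newtonRemainder_eq_zero_iff.2 (hc i hi)) hd_vanish
  exact fun z₁ z₂ => (congrFun hcd _).trans (hd z₁ z₂).symm

/-- for the intertwining sequence `Ω = A ⊕ B`, the Newton remainder
`e_j^{(p)} - L_{Ω_j} e_j^{(p)}` factors as the product of the Newton remainders
`e_{φ₁(j)}^{(p₁)} - L_{A_{φ₁(j)}} e_{φ₁(j)}^{(p₁)}` and
`e_{φ₂(j)}^{(p₂)} - L_{B_{φ₂(j)}} e_{φ₂(j)}^{(p₂)}`. -/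
theorem newton_remainder_intertwining {p₁ p₂ : ℕ} (hp₁ : 1 ≤ p₁) (hp₂ : 1 ≤ p₂)
    (κ₁ : ℕ → Fin p₁ → ℕ) (κ₂ : ℕ → Fin p₂ → ℕ) (κ : ℕ → Fin (p₁ + p₂) → ℕ)
    (hκ₁ : IsGLexEnum κ₁) (hκ₂ : IsGLexEnum κ₂) (hκ : IsGLexEnum κ)
    (φ₁ φ₂ : ℕ → ℕ)
    (hφ : ∀ j : ℕ, κ j = Fin.append (κ₁ (φ₁ j)) (κ₂ (φ₂ j)))
    (a : ℕ → Fin p₁ → ℂ) (b : ℕ → Fin p₂ → ℂ)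
    (ha : ∀ j : ℕ, 1 ≤ j → vdm κ₁ j a ≠ 0)
    (hb : ∀ j : ℕ, 1 ≤ j → vdm κ₂ j b ≠ 0)
    (ω : ℕ → Fin (p₁ + p₂) → ℂ)
    (hω : ∀ j : ℕ, ω j = Fin.append (a (φ₁ j)) (b (φ₂ j)))
    (hΩ : ∀ j : ℕ, 1 ≤ j → vdm κ j ω ≠ 0)
    (j : ℕ) (c c' c'' : ℕ → ℂ)
    (hc : ∀ i : ℕ, i < j →
      mono κ j (ω i) = ∑ t ∈ Finset.range j, c t * mono κ t (ω i))
    (hc' : ∀ i : ℕ, i < φ₁ j →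
      mono κ₁ (φ₁ j) (a i) = ∑ t ∈ Finset.range (φ₁ j), c' t * mono κ₁ t (a i))
    (hc'' : ∀ i : ℕ, i < φ₂ j →
      mono κ₂ (φ₂ j) (b i) = ∑ t ∈ Finset.range (φ₂ j), c'' t * mono κ₂ t (b i)) :
    ∀ (z₁ : Fin p₁ → ℂ) (z₂ : Fin p₂ → ℂ),
      mono κ j (Fin.append z₁ z₂) -
          ∑ t ∈ Finset.range j, c t * mono κ t (Fin.append z₁ z₂) =
        (mono κ₁ (φ₁ j) z₁ - ∑ t ∈ Finset.range (φ₁ j), c' t * mono κ₁ t z₁) *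
        (mono κ₂ (φ₂ j) z₂ - ∑ t ∈ Finset.range (φ₂ j), c'' t * mono κ₂ t z₂) :=
  newton_remainder_intertwining_general κ₁ κ₂ κ hκ₁ hκ₂ hκ φ₁ φ₂ hφ a b ω hω hΩ j c c' c'' hc hc'
    hc''

end PseudoLeja
end
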